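/- The branching operator is a derivation with respect to grafting: B_∨(graft(f,g)) = graft(B_∨(f), g) + graft(f, B_∨(g)) for all elements f, g of the free vector space on rooted planar binary trees, where graft is extended bilinearly. -/

import Mathlib

/-- Rooted planar binary trees. -/
inductive PBTree : Type
  | leaf : PBTree
  | graft : PBTree → PBTree → PBTree
  deriving DecidableEq

namespace PBTree

/-- The grade of a tree: its number of internal vertices. -/
def grade : PBTree → ℕ
  | leaf => 0
  | graft t1 t2 => grade t1 + grade t2 + 1

/-- The weight character ω. -/
def weight : PBTree → ℕ
  | leaf => 1
  | graft t1 t2 => Nat.choose (grade t1 + grade t2) (grade t1) * weight t1 * weight t2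

/-- The branching operator on a single tree: attach a cherry `∨` successively and
additively at each free leaf.  Values in the free ℚ-vector space `PBTree →₀ ℚ`. -/
noncomputable def Bv : PBTree → (PBTree →₀ ℚ)
  | leaf => Finsupp.single (graft leaf leaf) 1
  | graft t1 t2 =>
      (Bv t1).sum (fun σ a => Finsupp.single (graft σ t2) a)
        + (Bv t2).sum (fun σ a => Finsupp.single (graft t1 σ) a)

/-- The linear extension of the branching operator `B_∨` to the free vector space. -/
noncomputable def BvLin (f : PBTree →₀ ℚ) : PBTree →₀ ℚ :=
  f.sum fun τ a => a • Bv τ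

/-- The bilinear extension of grafting to the free vector space. -/
noncomputable def graftLin (f g : PBTree →₀ ℚ) : PBTree →₀ ℚ :=
  f.sum fun τ1 a => g.sum fun τ2 b => Finsupp.single (graft τ1 τ2) (a * b)

/-- The grading operator `G`, sending a tree `τ` of positive grade to `(1/|τ|)·τ`,
extended linearly. -/
noncomputable def Gop (f : PBTree →₀ ℚ) : PBTree →₀ ℚ :=
  f.sum fun τ a => Finsupp.single τ ((grade τ : ℚ)⁻¹ * a)

end PBTree

/-! Both sides of the identity are bilinear in `(f, g)`, so it suffices to check it on pairs of
trees `(s, t)`. There it is the recursive definition of `B_∨`: the free leaves of `graft s t`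
are those of `s` together with those of `t`. -/

namespace PBTree

open Finsupp

lemma graftLin_add_left (f f' g : PBTree →₀ ℚ) :
    graftLin (f + f') g = graftLin f g + graftLin f' g :=
  sum_add_index' (fun _ => by simp) fun _ a a' => by
    simp only [add_mul, single_add, sum_add]

lemma graftLin_add_right (f g g' : PBTree →₀ ℚ) :
    graftLin f (g + g') = graftLin f g + graftLin f g' := by
  simp only [graftLin, ← sum_add]
  refine sum_congr fun _ _ => sum_add_index' (fun _ => by simp) fun _ b b' => ?_
  simp only [mul_add, single_add]

lemma graftLin_smul_left (c : ℚ) (f g : PBTree →₀ ℚ) :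
    graftLin (c • f) g = c • graftLin f g := by
  unfold graftLin
  rw [sum_smul_index' (by simp)]
  simp only [smul_sum, smul_single, smul_eq_mul, mul_assoc]

lemma graftLin_smul_right (c : ℚ) (f g : PBTree →₀ ℚ) :
    graftLin f (c • g) = c • graftLin f g := by
  unfold graftLin
  rw [smul_sum]
  refine sum_congr fun τ1 _ => ?_
  rw [sum_smul_index' (by simp)]
  simp only [smul_sum, smul_single, smul_eq_mul, mul_left_comm c]

noncomputable def graftₗ : (PBTree →₀ ℚ) →ₗ[ℚ] (PBTree →₀ ℚ) →ₗ[ℚ] PBTree →₀ ℚ :=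
  LinearMap.mk₂ ℚ graftLin graftLin_add_left graftLin_smul_left graftLin_add_right
    graftLin_smul_right

lemma graftₗ_apply (f g : PBTree →₀ ℚ) : graftₗ f g = graftLin f g := rfl

lemma graftLin_single_single (s t : PBTree) (a b : ℚ) :
    graftLin (single s a) (single t b) = single (graft s t) (a * b) := by
  simp [graftLin]

lemma Bv_graft (s t : PBTree) :
    Bv (graft s t) = graftLin (Bv s) (single t 1) + graftLin (single s 1) (Bv t) := by
  simp [Bv, graftLin, -single_mul]

lemma BvLin_eq_linearCombination : BvLin = linearCombination ℚ Bv := rfl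

lemma graftₗ_compr₂_linearCombination_Bv :
    graftₗ.compr₂ (linearCombination ℚ Bv)
      = graftₗ ∘ₗ linearCombination ℚ Bv + graftₗ.compl₂ (linearCombination ℚ Bv) := by
  ext s t
  simp [graftₗ_apply, graftLin_single_single, Bv_graft]

end PBTree

open PBTree in
/-- The branching operator is a derivation with respect to grafting:
`B_∨(graft(f,g)) = graft(B_∨(f), g) + graft(f, B_∨(g))` for all elements `f, g`
of the free vector space on rooted planar binary trees. -/
theorem branching_derivation (f g : PBTree →₀ ℚ) :
    BvLin (graftLin f g) = graftLin (BvLin f) g + graftLin f (BvLin g) := by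
  simpa only [BvLin_eq_linearCombination, LinearMap.compr₂_apply, LinearMap.add_apply,
    LinearMap.comp_apply, LinearMap.compl₂_apply, graftₗ_apply] using
    LinearMap.congr_fun₂ graftₗ_compr₂_linearCombination_Bv f g
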